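/- As β → ∞, the β-neighbourhoods exhaust the open slab between the perpendicular lines through p and q: if x ∈ ℝ² satisfies ⟨x − p, q − p⟩ > 0 and ⟨x − q, p − q⟩ > 0, then there exists β₀ ≥ 1 such that x ∈ U_β(p,q) for all β ≥ β₀. -/

import Mathlib

/-!
The disc of radius `β |p - q| / 2` centred at `p + (β/2)(q - p)` contains `x` exactly when
`|x - p|² ≤ β ⟨x - p, q - p⟩`; when the inner product is positive this holds for all large `β`.
The lune is the intersection of this disc with the one obtained by swapping `p` and `q`.
-/

noncomputable section
open Metric
abbrev Pt := EuclideanSpace ℝ (Fin 2)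
/-- The β-neighbourhood (closed lune) of two planar points. -/
def lune (β : ℝ) (p q : Pt) : Set Pt :=
  closedBall ((1 - β/2) • p + (β/2) • q) (β * dist p q / 2) ∩
  closedBall ((β/2) • p + (1 - β/2) • q) (β * dist p q / 2)

open Filter
open scoped InnerProductSpace

section InnerProductSpace

variable {E : Type*} [NormedAddCommGroup E] [InnerProductSpace ℝ E]

/-- Expanding the square: `‖u - (β/2) v‖² = ‖u‖² - β ⟪u, v⟫ + (β ‖v‖ / 2)²`. -/
theorem norm_sub_half_smul_le_iff {β : ℝ} (hβ : 0 ≤ β) (u v : E) :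
    ‖u - (β / 2) • v‖ ≤ β * ‖v‖ / 2 ↔ ‖u‖ ^ 2 ≤ β * ⟪u, v⟫_ℝ := by
  rw [← sq_le_sq₀ (norm_nonneg _) (by positivity), norm_sub_sq_real, real_inner_smul_right,
    norm_smul, Real.norm_of_nonneg (by positivity)]
  constructor <;> intro h <;> linarith

theorem mem_closedBall_affine_iff {β : ℝ} (hβ : 0 ≤ β) (x p q : E) :
    x ∈ closedBall ((1 - β / 2) • p + (β / 2) • q) (β * dist p q / 2) ↔
      ‖x - p‖ ^ 2 ≤ β * ⟪x - p, q - p⟫_ℝ := by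
  have hcenter : x - ((1 - β / 2) • p + (β / 2) • q) = (x - p) - (β / 2) • (q - p) := by
    rw [smul_sub, sub_smul, one_smul]; abel
  rw [mem_closedBall, dist_eq_norm, hcenter, dist_comm, dist_eq_norm]
  exact norm_sub_half_smul_le_iff hβ _ _

theorem eventually_norm_sq_le_mul_inner {u v : E} (huv : 0 < ⟪u, v⟫_ℝ) :
    ∀ᶠ β in atTop, ‖u‖ ^ 2 ≤ β * ⟪u, v⟫_ℝ :=
  (eventually_ge_atTop (‖u‖ ^ 2 / ⟪u, v⟫_ℝ)).mono fun _ hβ => (div_le_iff₀ huv).mp hβ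

end InnerProductSpace

theorem mem_lune_iff {β : ℝ} (hβ : 0 ≤ β) (p q x : Pt) :
    x ∈ lune β p q ↔
      ‖x - p‖ ^ 2 ≤ β * ⟪x - p, q - p⟫_ℝ ∧ ‖x - q‖ ^ 2 ≤ β * ⟪x - q, p - q⟫_ℝ := by
  rw [lune, Set.mem_inter_iff, mem_closedBall_affine_iff hβ, add_comm ((β / 2) • p),
    dist_comm p q, mem_closedBall_affine_iff hβ]

theorem lune_exhausts_open_slab_general (p q : Pt) (x : Pt)
    (h1 : 0 < (inner ℝ (x - p) (q - p) : ℝ)) (h2 : 0 < (inner ℝ (x - q) (p - q) : ℝ)) :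
    ∃ β₀ : ℝ, 1 ≤ β₀ ∧ ∀ β : ℝ, β₀ ≤ β → x ∈ lune β p q := by
  have hmem : ∀ᶠ β in atTop, x ∈ lune β p q := by
    filter_upwards [eventually_ge_atTop 0, eventually_norm_sq_le_mul_inner h1,
      eventually_norm_sq_le_mul_inner h2] with β hβ hp hq
    exact (mem_lune_iff hβ p q x).mpr ⟨hp, hq⟩
  obtain ⟨β₀, hβ₀⟩ := eventually_atTop.mp hmem
  exact ⟨max 1 β₀, le_max_left _ _, fun β hβ => hβ₀ β (le_of_max_le_right hβ)⟩

theorem lune_exhausts_open_slab (p q : Pt) (hpq : p ≠ q) (x : Pt)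
    (h1 : 0 < (inner ℝ (x - p) (q - p) : ℝ)) (h2 : 0 < (inner ℝ (x - q) (p - q) : ℝ)) :
    ∃ β₀ : ℝ, 1 ≤ β₀ ∧ ∀ β : ℝ, β₀ ≤ β → x ∈ lune β p q :=
  lune_exhausts_open_slab_general p q x h1 h2
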